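/- arXiv:1208.3861 — 2 statements merged into one kernel-verified Lean document; each statement's English description precedes it below -/
import Mathlib

section
/- Let ξ and ξ′ be the functions on ℝ⁴ × ℝ⁴ given by ξ((q₁,q₂,p₁,p₂),(q₁′,q₂′,p₁′,p₂′)) = ½(q₁p₁′ + q₂p₂′ − p₁q₁′ − p₂q₂′) and ξ′((q₁,q₂,p₁,p₂),(q₁′,q₂′,p₁′,p₂′)) = ½(p₁p₂′ − p₂p₁′). Then the difference ξ₁ := ξ − ξ′ is not a coboundary: there is no function ζ : ℝ⁴ → ℝ such that ξ₁(g′,g) = ζ(g′) + ζ(g) − ζ(g′+g) for all g,g′ ∈ ℝ⁴. Hence ξ and ξ′ are inequivalent local exponents of the additive group (ℝ⁴, +). -/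
/-!
On an abelian group the coboundary `ζ g' + ζ g - ζ (g' + g)` of any `ζ` is symmetric in `g, g'`,
whereas `ξ - ξ'` is a nonzero antisymmetric form: swapping `(0,0,1,0)` and `(1,0,0,0)` changes
its sign.
-/

noncomputable section

/-- `G_T = (ℝ⁴, +)`, with a generic element written `(q₁, q₂, p₁, p₂)`. -/
abbrev GT := ℝ × ℝ × ℝ × ℝ

/-- `ξ((q₁,q₂,p₁,p₂),(q₁′,q₂′,p₁′,p₂′)) = ½(q₁p₁′ + q₂p₂′ − p₁q₁′ − p₂q₂′)`. -/
def xi (g g' : GT) : ℝ :=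
  (1 / 2) * (g.1 * g'.2.2.1 + g.2.1 * g'.2.2.2 - g.2.2.1 * g'.1 - g.2.2.2 * g'.2.1)

/-- `ξ′((q₁,q₂,p₁,p₂),(q₁′,q₂′,p₁′,p₂′)) = ½(p₁p₂′ − p₂p₁′)`. -/
def xi' (g g' : GT) : ℝ :=
  (1 / 2) * (g.2.2.1 * g'.2.2.2 - g.2.2.2 * g'.2.2.1)

theorem not_exists_coboundary_of_ne_swap {G R : Type*} [AddCommMagma G] [AddCommGroup R]
    (f : G → G → R) {a b : G} (hab : f a b ≠ f b a) :
    ¬ ∃ ζ : G → R, ∀ g g' : G, f g' g = ζ g' + ζ g - ζ (g' + g) := by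
  rintro ⟨ζ, hζ⟩
  apply hab
  rw [hζ, hζ, add_comm (ζ a), add_comm a]

/-- The difference `ξ₁ = ξ − ξ′` is not a coboundary of `(ℝ⁴, +)`: there is no
`ζ : ℝ⁴ → ℝ` with `ξ₁(g′,g) = ζ(g′) + ζ(g) − ζ(g′ + g)` for all `g, g′`.
Hence the local exponents `ξ` and `ξ′` are inequivalent. -/
theorem xi_sub_xi'_not_coboundary :
    ¬ ∃ ζ : GT → ℝ, ∀ g g' : GT,
      xi g' g - xi' g' g = ζ g' + ζ g - ζ (g' + g) :=
  not_exists_coboundary_of_ne_swap (fun g' g => xi g' g - xi' g' g)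
    (a := ((0, 0, 1, 0) : GT)) (b := (1, 0, 0, 0)) (by norm_num [xi, xi'])
end
end

section
/- Fix real numbers α, β, γ. On the Schwartz space 𝒮(ℝ², ℂ), with variables written (s₁, s₂), define the linear operators (P̂₁ f)(s₁,s₂) = −s₁ f(s₁,s₂), (Q̂₁ f)(s₁,s₂) = β s₂ f(s₁,s₂) − iα ∂f/∂s₁ (s₁,s₂), (P̂₂ f)(s₁,s₂) = α s₂ f(s₁,s₂) − iγ ∂f/∂s₁ (s₁,s₂), (Q̂₂ f)(s₁,s₂) = i ∂f/∂s₂ (s₁,s₂). Then these operators map 𝒮(ℝ², ℂ) to itself and satisfy [Q̂_j, P̂_k] = iα δ_{jk} I for j, k = 1, 2, [Q̂₁, Q̂₂] = −iβ I, and [P̂₁, P̂₂] = −iγ I, where [A, B] = AB − BA and I is the identity operator on 𝒮(ℝ², ℂ). -/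
noncomputable section

/-- Schwartz space `𝒮(ℝ², ℂ)`, with variables written `(s₁, s₂)` (i.e. `s 0, s 1`). -/
abbrev Sch := SchwartzMap (Fin 2 → ℝ) ℂ

/-!
Write `X_j` for multiplication by the coordinate `s_j` and `D_j = ∂/∂s_j`, viewed in the
associative algebra of linear endomorphisms of `𝒮`. Then `P̂₁ = -X₁`, `Q̂₁ = βX₂ - iαD₁`,
`P̂₂ = αX₂ - iγD₁` and `Q̂₂ = iD₂`. The Leibniz rule gives the canonical relations
`[D_j, X_k] = δ_jk`, the `X_j` commute with each other, and the `D_j` commute by the symmetry of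
second derivatives of smooth functions; every stated relation then follows from these by
bilinearity of the commutator.
-/

open LineDeriv

-- Mathlib makes the commutator bracket of an associative ring only a local instance.
attribute [local instance] LieRing.ofAssociativeRing

namespace SchwartzMap

variable {E F : Type*} [NormedAddCommGroup E] [NormedSpace ℝ E]
  [NormedAddCommGroup F] [NormedSpace ℂ F]

def mulLinearEnd (ℓ : E →L[ℝ] ℝ) : Module.End ℂ 𝓢(E, F) :=
  (smulLeftCLM F (fun x => (ℓ x : ℂ))).toLinearMap

def lineDerivEnd (v : E) : Module.End ℂ 𝓢(E, F) :=
  (lineDerivOpCLM ℂ 𝓢(E, F) v).toLinearMap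

theorem mulLinearEnd_apply (ℓ : E →L[ℝ] ℝ) (f : 𝓢(E, F)) (x : E) :
    mulLinearEnd ℓ f x = (ℓ x : ℂ) • f x :=
  smulLeftCLM_apply_apply (by fun_prop) f x

theorem lineDerivEnd_apply (v : E) (f : 𝓢(E, F)) (x : E) :
    lineDerivEnd v f x = fderiv ℝ f x v :=
  rfl

theorem lineDerivOp_lineDerivOp_comm (v w : E) (f : 𝓢(E, F)) :
    ∂_{v} (∂_{w} f) = ∂_{w} (∂_{v} f) := by
  ext x
  have hsymm : IsSymmSndFDerivAt ℝ f x := (f.smooth 2).contDiffAt.isSymmSndFDerivAt (by simp)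
  have h (u u' : E) : ∂_{u} (∂_{u'} f) x = fderiv ℝ (fderiv ℝ f) x u u' := by
    have h2 := iteratedLineDerivOp_eq_iteratedFDeriv (f := f) (x := x) (m := ![u, u'])
    rwa [iteratedFDeriv_two_apply] at h2
  rw [h, h, hsymm]

theorem lineDerivOp_mulLinearEnd (v : E) (ℓ : E →L[ℝ] ℝ) (f : 𝓢(E, F)) :
    ∂_{v} (mulLinearEnd ℓ f) = (ℓ v : ℂ) • f + mulLinearEnd ℓ (∂_{v} f) := by
  ext x
  have hcoe : ⇑(mulLinearEnd ℓ f) = ⇑(Complex.ofRealCLM.comp ℓ) • ⇑f :=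
    funext (mulLinearEnd_apply ℓ f)
  have hderiv := ((Complex.ofRealCLM.comp ℓ).hasFDerivAt (x := x)).smul (f.hasFDerivAt x)
  rw [lineDerivOp_apply_eq_fderiv, hcoe, hderiv.fderiv]
  simp [mulLinearEnd_apply, lineDerivOp_apply_eq_fderiv, add_comm]

theorem lie_lineDerivEnd_mulLinearEnd (v : E) (ℓ : E →L[ℝ] ℝ) :
    ⁅lineDerivEnd (F := F) v, mulLinearEnd (F := F) ℓ⁆ = (ℓ v : ℂ) • 1 := by
  ext1 f
  simp [Ring.lie_def, lineDerivEnd, lineDerivOp_mulLinearEnd]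

theorem lie_lineDerivEnd_lineDerivEnd (v w : E) :
    ⁅lineDerivEnd (F := F) v, lineDerivEnd (F := F) w⁆ = 0 := by
  ext1 f
  simp [Ring.lie_def, lineDerivEnd, lineDerivOp_lineDerivOp_comm v w]

theorem lie_mulLinearEnd_mulLinearEnd (ℓ ℓ' : E →L[ℝ] ℝ) :
    ⁅mulLinearEnd (F := F) ℓ, mulLinearEnd (F := F) ℓ'⁆ = 0 := by
  ext f x
  simp [Ring.lie_def, mulLinearEnd_apply, smul_smul, mul_comm]

end SchwartzMap

namespace TriplyExtended

open SchwartzMap Complex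

-- Coordinates are indexed from `0`: `X 0` is multiplication by `s₁`.
abbrev X (j : Fin 2) : Module.End ℂ Sch := mulLinearEnd (ContinuousLinearMap.proj j)

abbrev D (j : Fin 2) : Module.End ℂ Sch := lineDerivEnd (Pi.single j 1)

theorem lie_D_X (i j : Fin 2) : ⁅D i, X j⁆ = (if i = j then 1 else 0 : ℂ) • 1 := by
  rw [lie_lineDerivEnd_mulLinearEnd]
  fin_cases i <;> fin_cases j <;> simp

theorem lie_X_D (i j : Fin 2) : ⁅X i, D j⁆ = -(if j = i then 1 else 0 : ℂ) • 1 := by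
  rw [← lie_skew, lie_D_X, neg_smul]

theorem lie_X_X (i j : Fin 2) : ⁅X i, X j⁆ = 0 := lie_mulLinearEnd_mulLinearEnd _ _

theorem lie_D_D (i j : Fin 2) : ⁅D i, D j⁆ = 0 := lie_lineDerivEnd_lineDerivEnd _ _

variable (α β γ : ℝ)

def P₁ : Module.End ℂ Sch := -X 0
def Q₁ : Module.End ℂ Sch := (β : ℂ) • X 1 - (I * α) • D 0
def P₂ : Module.End ℂ Sch := (α : ℂ) • X 1 - (I * γ) • D 0
def Q₂ : Module.End ℂ Sch := I • D 1

theorem lie_Q₁_P₁ : ⁅Q₁ α β, P₁⁆ = (I * α) • 1 := by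
  simp only [P₁, Q₁, sub_lie, lie_neg, smul_lie, lie_D_X, lie_X_X, Fin.isValue, reduceIte]
  module

theorem lie_Q₂_P₂ : ⁅Q₂, P₂ α γ⁆ = (I * α) • 1 := by
  simp only [P₂, Q₂, lie_sub, lie_smul, smul_lie, lie_D_X, lie_D_D, Fin.isValue, reduceIte]
  module

theorem lie_Q₁_P₂ : ⁅Q₁ α β, P₂ α γ⁆ = 0 := by
  simp only [Q₁, P₂, lie_sub, sub_lie, lie_smul, smul_lie, lie_D_X, lie_X_D,
    lie_X_X, lie_D_D, Fin.reduceEq, Fin.isValue, reduceIte]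
  module

theorem lie_Q₂_P₁ : ⁅Q₂, P₁⁆ = 0 := by
  simp only [Q₂, P₁, lie_neg, smul_lie, lie_D_X, Fin.reduceEq, Fin.isValue, reduceIte]
  module

theorem lie_Q₁_Q₂ : ⁅Q₁ α β, Q₂⁆ = -(I * β) • 1 := by
  simp only [Q₁, Q₂, sub_lie, lie_smul, smul_lie, lie_X_D, lie_D_D, Fin.isValue, reduceIte]
  module

theorem lie_P₁_P₂ : ⁅P₁, P₂ α γ⁆ = -(I * γ) • 1 := by
  simp only [P₁, P₂, lie_sub, neg_lie, lie_smul, lie_X_D, lie_X_X, Fin.isValue, reduceIte]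
  module

theorem P₁_apply (f : Sch) (s : Fin 2 → ℝ) : P₁ f s = -((s 0 : ℝ) : ℂ) * f s := by
  simp [P₁, mulLinearEnd_apply]

theorem Q₁_apply (f : Sch) (s : Fin 2 → ℝ) :
    Q₁ α β f s = ((β * s 1 : ℝ) : ℂ) * f s
      - I * (α : ℂ) * fderiv ℝ (⇑f) s (Pi.single 0 1) := by
  simp only [Q₁, LinearMap.sub_apply, LinearMap.smul_apply, sub_apply, smul_apply,
    mulLinearEnd_apply, lineDerivEnd_apply, ContinuousLinearMap.proj_apply, smul_eq_mul]
  push_cast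
  ring

theorem P₂_apply (f : Sch) (s : Fin 2 → ℝ) :
    P₂ α γ f s = ((α * s 1 : ℝ) : ℂ) * f s
      - I * (γ : ℂ) * fderiv ℝ (⇑f) s (Pi.single 0 1) := by
  simp only [P₂, LinearMap.sub_apply, LinearMap.smul_apply, sub_apply, smul_apply,
    mulLinearEnd_apply, lineDerivEnd_apply, ContinuousLinearMap.proj_apply, smul_eq_mul]
  push_cast
  ring

theorem Q₂_apply (f : Sch) (s : Fin 2 → ℝ) : Q₂ f s = I * fderiv ℝ (⇑f) s (Pi.single 1 1) := by
  simp [Q₂, lineDerivEnd_apply]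

end TriplyExtended

/-- The operators representing the noncentral generators of the triply centrally
extended group of translations of ℝ⁴ map `𝒮(ℝ², ℂ)` to itself and satisfy
`[Q̂_j, P̂_k] = iα δ_{jk} I`, `[Q̂₁, Q̂₂] = −iβ I`, `[P̂₁, P̂₂] = −iγ I`: there are
linear operators `P̂₁, Q̂₁, P̂₂, Q̂₂` on `𝒮(ℝ², ℂ)` acting by
`(P̂₁f)(s₁,s₂) = −s₁ f`, `(Q̂₁f)(s₁,s₂) = βs₂ f − iα ∂f/∂s₁`,
`(P̂₂f)(s₁,s₂) = αs₂ f − iγ ∂f/∂s₁`, `(Q̂₂f)(s₁,s₂) = i ∂f/∂s₂`, and they obey the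
stated commutation relations. -/
theorem triply_extended_operators_commutation (α β γ : ℝ) :
    ∃ P₁ Q₁ P₂ Q₂ : Sch →ₗ[ℂ] Sch,
      (∀ (f : Sch) (s : Fin 2 → ℝ), P₁ f s = -((s 0 : ℝ) : ℂ) * f s) ∧
      (∀ (f : Sch) (s : Fin 2 → ℝ), Q₁ f s
        = ((β * s 1 : ℝ) : ℂ) * f s
          - Complex.I * (α : ℂ) * fderiv ℝ (⇑f) s (Pi.single 0 1)) ∧
      (∀ (f : Sch) (s : Fin 2 → ℝ), P₂ f s
        = ((α * s 1 : ℝ) : ℂ) * f s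
          - Complex.I * (γ : ℂ) * fderiv ℝ (⇑f) s (Pi.single 0 1)) ∧
      (∀ (f : Sch) (s : Fin 2 → ℝ), Q₂ f s
        = Complex.I * fderiv ℝ (⇑f) s (Pi.single 1 1)) ∧
      (∀ f : Sch, Q₁ (P₁ f) - P₁ (Q₁ f) = (Complex.I * (α : ℂ)) • f) ∧
      (∀ f : Sch, Q₂ (P₂ f) - P₂ (Q₂ f) = (Complex.I * (α : ℂ)) • f) ∧
      (∀ f : Sch, Q₁ (P₂ f) - P₂ (Q₁ f) = 0) ∧
      (∀ f : Sch, Q₂ (P₁ f) - P₁ (Q₂ f) = 0) ∧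
      (∀ f : Sch, Q₁ (Q₂ f) - Q₂ (Q₁ f) = (-(Complex.I * (β : ℂ))) • f) ∧
      (∀ f : Sch, P₁ (P₂ f) - P₂ (P₁ f) = (-(Complex.I * (γ : ℂ))) • f) :=
  open TriplyExtended in
  ⟨P₁, Q₁ α β, P₂ α γ, Q₂, P₁_apply, Q₁_apply α β, P₂_apply α γ, Q₂_apply,
    LinearMap.congr_fun (lie_Q₁_P₁ α β), LinearMap.congr_fun (lie_Q₂_P₂ α γ),
    LinearMap.congr_fun (lie_Q₁_P₂ α β γ), LinearMap.congr_fun lie_Q₂_P₁,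
    LinearMap.congr_fun (lie_Q₁_Q₂ α β), LinearMap.congr_fun (lie_P₁_P₂ α γ)⟩
end
end
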